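/- arXiv:2302.02510 — 3 statements merged into one kernel-verified Lean document; each statement's English description precedes it below -/
import Mathlib

section
/- (General energy formula) Let G be a finite abstract simplicial complex, R a commutative ring, h : G^m → R any function, and define W(A) = Σ_{(z_1,...,z_m) ∈ A^m, z_1 ∩ ... ∩ z_m ∈ A} h(z_1,...,z_m) for A ⊆ G. Then for every k ≥ 1, W(G) = Σ_{(x_1,...,x_k) ∈ G^k} (Π_j (-1)^{dim(x_j)}) · W(U(x_1) ∩ ... ∩ U(x_k)). -/
open Finset

variable {α : Type*} [DecidableEq α]

/-- The star `U(x) = {y ∈ G : x ⊆ y}` of a simplex `x` in the complex `G`. -/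
def starC (G : Finset (Finset α)) (x : Finset α) : Finset (Finset α) :=
  G.filter (fun y => x ⊆ y)

/-- The unit ball `B(x)`: the closure of the star `U(x)`. -/
def ballC (G : Finset (Finset α)) (x : Finset α) : Finset (Finset α) :=
  G.filter (fun z => ∃ y ∈ G, x ⊆ y ∧ z ⊆ y)

/-- The unit sphere `S(x) = B(x) \ U(x)`. -/
def sphereC (G : Finset (Finset α)) (x : Finset α) : Finset (Finset α) :=
  ballC G x \ starC G x

/-- `G` is a finite abstract simplicial complex: a finite set of nonempty finite sets
closed under taking nonempty subsets. -/
def IsComplex (G : Finset (Finset α)) : Prop :=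
  (∀ x ∈ G, x.Nonempty) ∧ ∀ x ∈ G, ∀ y, y ⊆ x → y.Nonempty → y ∈ G

/-- The intersection `x_1 ∩ ... ∩ x_m` of a tuple of finite sets (for `m ≥ 1`). -/
def interTuple {m : ℕ} (X : Fin m → Finset α) : Finset α :=
  (Finset.univ.sup X).filter (fun v => ∀ j, v ∈ X j)

/-- The `m`-th characteristic `w_m(A)`. -/
def wm (m : ℕ) (A : Finset (Finset α)) : ℤ :=
  ∑ X ∈ Fintype.piFinset (fun _ : Fin m => A),
    if interTuple X ∈ A then ∏ j, (-1 : ℤ) ^ ((X j).card - 1) else 0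

/-- `U` is open in the star topology on `G`: a union of stars. -/
def SCOpen (G U : Finset (Finset α)) : Prop :=
  ∃ T ⊆ G, U = T.biUnion (fun x => starC G x)

/- Auxiliary lemmas -/
lemma ball_sum_eq_one {R : Type*} [CommRing R] (G : Finset (Finset ℕ))
    (hne : ∀ x ∈ G, x.Nonempty) (hcl : ∀ x ∈ G, ∀ y, y ⊆ x → y.Nonempty → y ∈ G)
    (w : Finset ℕ) (hw : w ∈ G) :
    ∑ x ∈ G.filter (· ⊆ w), (-1 : R) ^ (x.card - 1) = 1 := by
  have hfe : G.filter (· ⊆ w) = w.powerset.filter (Finset.Nonempty) := by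
    ext x
    simp only [mem_filter, mem_powerset]
    constructor
    · rintro ⟨hx, hxw⟩; exact ⟨hxw, hne x hx⟩
    · rintro ⟨hxw, h0⟩; exact ⟨hcl w hw x hxw h0, hxw⟩
  rw [hfe]
  have h1 : ∀ x ∈ w.powerset.filter (Finset.Nonempty),
      (-1 : R) ^ (x.card - 1) = -((-1 : R) ^ x.card) := by
    intro x hx
    simp only [mem_filter] at hx
    have hc : 1 ≤ x.card := Finset.card_pos.mpr hx.2
    obtain ⟨n, hn⟩ : ∃ n, x.card = n + 1 := ⟨x.card - 1, by omega⟩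
    rw [hn]
    simp [pow_succ]
  rw [Finset.sum_congr rfl h1, Finset.sum_neg_distrib]
  have h2 : ∑ x ∈ w.powerset.filter (Finset.Nonempty), ((-1 : R) ^ x.card)
      = (∑ x ∈ w.powerset, ((-1 : R) ^ x.card)) - 1 := by
    have : w.powerset = insert (∅ : Finset ℕ) (w.powerset.filter (Finset.Nonempty)) := by
      ext x
      simp only [mem_insert, mem_filter, mem_powerset]
      constructor
      · intro hx
        rcases x.eq_empty_or_nonempty with h | h
        · exact Or.inl h
        · exact Or.inr ⟨hx, h⟩
      · rintro (rfl | ⟨hx, _⟩)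
        · exact empty_subset w
        · exact hx
    conv_rhs => rw [this]
    rw [Finset.sum_insert (by simp)]
    simp
  rw [h2]
  have h3 : (∑ x ∈ w.powerset, ((-1 : R) ^ x.card)) = 0 := by
    have := Finset.sum_powerset_neg_one_pow_card_of_nonempty (hne w hw)
    have hcast : ((∑ x ∈ w.powerset, ((-1 : ℤ) ^ x.card) : ℤ) : R)
        = ∑ x ∈ w.powerset, ((-1 : R) ^ x.card) := by push_cast; rfl
    rw [this] at hcast
    simpa using hcast.symm
  rw [h3]; ring

lemma interTuple_subset {m : ℕ} (Z : Fin m → Finset ℕ) (i : Fin m) :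
    interTuple Z ⊆ Z i := fun v hv => (Finset.mem_filter.mp hv).2 i

theorem general_energy' (G : Finset (Finset ℕ))
    (hne : ∀ x ∈ G, x.Nonempty) (hcl : ∀ x ∈ G, ∀ y, y ⊆ x → y.Nonempty → y ∈ G)
    (R : Type*) [CommRing R] (m : ℕ) (hm : 1 ≤ m)
    (h : (Fin m → Finset ℕ) → R) (W : Finset (Finset ℕ) → R)
    (hW : ∀ A : Finset (Finset ℕ),
      W A = ∑ Z ∈ Fintype.piFinset (fun _ : Fin m => A),
        if interTuple Z ∈ A then h Z else 0)
    (k : ℕ) (hk : 1 ≤ k) :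
    W G = ∑ X ∈ Fintype.piFinset (fun _ : Fin k => G),
      (∏ j, (-1 : R) ^ ((X j).card - 1)) *
        W (G.filter (fun y => ∀ j, X j ⊆ y)) := by
  have hAW : ∀ X : Fin k → Finset ℕ,
      W (G.filter (fun y => ∀ j, X j ⊆ y)) =
        ∑ Z ∈ Fintype.piFinset (fun _ : Fin m => G),
          if interTuple Z ∈ G ∧ ∀ j, X j ⊆ interTuple Z then h Z else 0 := by
    intro X
    rw [hW]
    have hsub : Fintype.piFinset (fun _ : Fin m => G.filter (fun y => ∀ j, X j ⊆ y))
        ⊆ Fintype.piFinset (fun _ : Fin m => G) := by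
      intro Z hZ
      simp only [Fintype.mem_piFinset] at *
      exact fun i => (Finset.mem_filter.mp (hZ i)).1
    have hcong : ∀ Z ∈ Fintype.piFinset (fun _ : Fin m => G.filter (fun y => ∀ j, X j ⊆ y)),
        (if interTuple Z ∈ G.filter (fun y => ∀ j, X j ⊆ y) then h Z else 0)
        = if interTuple Z ∈ G ∧ ∀ j, X j ⊆ interTuple Z then h Z else 0 := by
      intro Z _
      simp only [Finset.mem_filter]
    rw [Finset.sum_congr rfl hcong]
    refine Finset.sum_subset hsub ?_
    intro Z hZG hZA
    rw [if_neg]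
    rintro ⟨h1, h2⟩
    apply hZA
    simp only [Fintype.mem_piFinset, Finset.mem_filter] at *
    exact fun i => ⟨hZG i, fun j => (h2 j).trans (interTuple_subset Z i)⟩
  rw [hW G]
  have step : (∑ X ∈ Fintype.piFinset (fun _ : Fin k => G),
      (∏ j, (-1 : R) ^ ((X j).card - 1)) * W (G.filter (fun y => ∀ j, X j ⊆ y)))
      = ∑ X ∈ Fintype.piFinset (fun _ : Fin k => G),
        (∏ j, (-1 : R) ^ ((X j).card - 1)) *
          ∑ Z ∈ Fintype.piFinset (fun _ : Fin m => G),
            (if interTuple Z ∈ G ∧ ∀ j, X j ⊆ interTuple Z then h Z else 0) :=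
    Finset.sum_congr rfl fun X _ => by rw [hAW X]
  rw [step]
  simp_rw [Finset.mul_sum]
  rw [Finset.sum_comm]
  refine Finset.sum_congr rfl fun Z hZ => ?_
  by_cases hP : interTuple Z ∈ G
  · simp only [hP, true_and, if_pos, mul_ite, mul_zero]
    have hfil : (Fintype.piFinset (fun _ : Fin k => G)).filter
          (fun X => ∀ j, X j ⊆ interTuple Z)
        = Fintype.piFinset (fun _ : Fin k => G.filter (· ⊆ interTuple Z)) := by
      ext X
      simp only [Finset.mem_filter, Fintype.mem_piFinset, ← forall_and]
    rw [← Finset.sum_filter, hfil, ← Finset.sum_mul,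
      ← Finset.prod_univ_sum (fun _ : Fin k => G.filter (· ⊆ interTuple Z))
        (fun _ x => (-1 : R) ^ (x.card - 1))]
    have : ∀ j : Fin k, (∑ x ∈ G.filter (· ⊆ interTuple Z), (-1 : R) ^ (x.card - 1)) = 1 :=
      fun _ => ball_sum_eq_one G hne hcl _ hP
    rw [Finset.prod_congr rfl (fun j _ => this j), Finset.prod_const_one, one_mul]
  · simp [hP]

/-- General energy formula: for any commutative ring `R`, any interaction function
`h : G^m → R` with associated energy `W(A) = Σ_{Z ∈ A^m, ∩ Z ∈ A} h(Z)`, and any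
`k ≥ 1`, `W(G) = Σ_{X ∈ G^k} (Π_j (-1)^{dim x_j}) · W(U(x_1) ∩ ... ∩ U(x_k))`. -/
theorem general_energy_formula (G : Finset (Finset ℕ)) (hG : IsComplex G)
    (R : Type*) [CommRing R] (m : ℕ) (hm : 1 ≤ m)
    (h : (Fin m → Finset ℕ) → R) (W : Finset (Finset ℕ) → R)
    (hW : ∀ A : Finset (Finset ℕ),
      W A = ∑ Z ∈ Fintype.piFinset (fun _ : Fin m => A),
        if interTuple Z ∈ A then h Z else 0)
    (k : ℕ) (hk : 1 ≤ k) :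
    W G = ∑ X ∈ Fintype.piFinset (fun _ : Fin k => G),
      (∏ j, (-1 : R) ^ ((X j).card - 1)) *
        W (G.filter (fun y => ∀ j, X j ⊆ y)) := by
  exact general_energy' G hG.1 hG.2 R m hm h W hW k hk
end

section
/- If G is a finite abstract simplicial complex such that w_m(S(x)) = c for all x ∈ G, where c ≠ 0 is a fixed integer and m ≥ 1, then Σ_{x∈G} (-1)^{dim(x)} c = 0, hence the Euler characteristic χ(G) = 0. -/
open Finset

variable {α : Type*} [DecidableEq α]

/-- Euler characteristic of a cone is 1. -/
lemma chi_cone (A : Finset (Finset ℕ)) (v : ℕ)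
    (hne : ∀ x ∈ A, x.Nonempty)
    (hins : ∀ x ∈ A, insert v x ∈ A)
    (hers : ∀ x ∈ A, (x.erase v).Nonempty → x.erase v ∈ A)
    (hv : ({v} : Finset ℕ) ∈ A) :
    ∑ x ∈ A, (-1 : ℤ) ^ (x.card - 1) = 1 := by
  classical
  rw [← Finset.sum_filter_add_sum_filter_not A (fun x => v ∈ x)]
  have hv1 : ({v} : Finset ℕ) ∈ A.filter (fun x => v ∈ x) := by
    simp [hv]
  rw [← Finset.add_sum_erase _ _ hv1]
  have hbij : ∑ x ∈ (A.filter (fun x => v ∈ x)).erase {v}, (-1 : ℤ) ^ (x.card - 1)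
      = ∑ x ∈ A.filter (fun x => ¬ v ∈ x), -((-1 : ℤ) ^ (x.card - 1)) := by
    refine Finset.sum_nbij' (fun x => x.erase v) (fun x => insert v x) ?_ ?_ ?_ ?_ ?_
    · intro a ha
      rw [Finset.mem_erase, Finset.mem_filter] at ha
      obtain ⟨hav, haA, hvmem⟩ := ha
      have hne' : (a.erase v).Nonempty := by
        rcases Finset.eq_empty_or_nonempty (a.erase v) with h | h
        · exfalso
          apply hav
          apply Finset.eq_singleton_iff_unique_mem.2
          refine ⟨hvmem, fun u hu => ?_⟩
          by_contra hu'
          have : u ∈ a.erase v := Finset.mem_erase.2 ⟨hu', hu⟩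
          simp [h] at this
        · exact h
      rw [Finset.mem_filter]
      exact ⟨hers a haA hne', by simp⟩
    · intro a ha
      rw [Finset.mem_filter] at ha
      rw [Finset.mem_erase, Finset.mem_filter]
      refine ⟨?_, hins a ha.1, Finset.mem_insert_self v a⟩
      intro h
      have h' : insert v a = {v} := h
      obtain ⟨u, hu⟩ := hne a ha.1
      have h2 : u ∈ ({v} : Finset ℕ) := h' ▸ Finset.mem_insert_of_mem hu
      rw [Finset.mem_singleton] at h2
      exact ha.2 (h2 ▸ hu)
    · intro a ha
      rw [Finset.mem_erase, Finset.mem_filter] at ha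
      exact Finset.insert_erase ha.2.2
    · intro a ha
      rw [Finset.mem_filter] at ha
      exact Finset.erase_insert ha.2
    · intro a ha
      rw [Finset.mem_erase, Finset.mem_filter] at ha
      have hcard : a.card = (a.erase v).card + 1 := by
        rw [Finset.card_erase_of_mem ha.2.2]
        have : 1 ≤ a.card := Finset.card_pos.2 (hne a ha.2.1)
        omega
      have hcard2 : 1 ≤ (a.erase v).card := by
        rcases Finset.eq_empty_or_nonempty (a.erase v) with h | h
        · exfalso
          apply ha.1
          apply Finset.eq_singleton_iff_unique_mem.2
          refine ⟨ha.2.2, fun u hu => ?_⟩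
          by_contra hu'
          have : u ∈ a.erase v := Finset.mem_erase.2 ⟨hu', hu⟩
          simp [h] at this
        · exact Finset.card_pos.2 h
      rw [hcard]
      rw [show (a.erase v).card + 1 - 1 = ((a.erase v).card - 1) + 1 by omega]
      rw [pow_succ]
      ring
  rw [hbij]
  simp [Finset.sum_neg_distrib]

/-- Coefficient of a fixed tuple in the sphere formula vanishes. -/
lemma key_vanish (G : Finset (Finset ℕ)) (hG : IsComplex G) {m : ℕ} (hm : 1 ≤ m)
    (X : Fin m → Finset ℕ) (hX : ∀ j, X j ∈ G) (hz : interTuple X ∈ G) :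
    ∑ x ∈ G.filter (fun x => ∀ j, X j ∈ sphereC G x), (-1 : ℤ) ^ (x.card - 1) = 0 := by
  classical
  obtain ⟨v, hv⟩ := hG.1 _ hz
  have hvX : ∀ j, v ∈ X j := by
    have := (Finset.mem_filter.1 hv).2
    exact this
  set j₀ : Fin m := ⟨0, hm⟩
  set K : Finset (Finset ℕ) :=
    G.filter (fun x => ∀ j, ∃ w ∈ G, x ⊆ w ∧ X j ⊆ w) with hK
  set KD : Finset (Finset ℕ) := K.filter (fun x => ∃ j, x ⊆ X j) with hKD
  -- the set we sum over is K \ KD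
  have hset : G.filter (fun x => ∀ j, X j ∈ sphereC G x) = K \ KD := by
    ext x
    simp only [Finset.mem_filter, Finset.mem_sdiff, hK, hKD, sphereC, ballC, starC,
      Finset.mem_sdiff, Finset.mem_filter]
    constructor
    · rintro ⟨hxG, h⟩
      refine ⟨⟨hxG, fun j => ?_⟩, ?_⟩
      · obtain ⟨⟨_, w, hwG, hxw, hXw⟩, _⟩ := h j
        exact ⟨w, hwG, hxw, hXw⟩
      · rintro ⟨⟨_, _⟩, j, hsub⟩
        exact (h j).2 ⟨hX j, hsub⟩
    · rintro ⟨⟨hxG, h⟩, hnd⟩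
      refine ⟨hxG, fun j => ⟨⟨hX j, ?_⟩, ?_⟩⟩
      · obtain ⟨w, hwG, hxw, hXw⟩ := h j
        exact ⟨w, hwG, hxw, hXw⟩
      · rintro ⟨_, hsub⟩
        exact hnd ⟨⟨hxG, h⟩, j, hsub⟩
  have hKDsub : KD ⊆ K := Finset.filter_subset _ _
  have hKchi : ∑ x ∈ K, (-1 : ℤ) ^ (x.card - 1) = 1 := by
    apply chi_cone _ v
    · intro x hx
      exact hG.1 x (Finset.mem_filter.1 hx).1
    · intro x hx
      obtain ⟨hxG, h⟩ := Finset.mem_filter.1 hx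
      obtain ⟨w, hwG, hxw, hXw⟩ := h j₀
      have hiw : insert v x ⊆ w := Finset.insert_subset (hXw (hvX j₀)) hxw
      refine Finset.mem_filter.2 ⟨hG.2 w hwG _ hiw (Finset.insert_nonempty _ _), fun j => ?_⟩
      obtain ⟨w', hwG', hxw', hXw'⟩ := h j
      exact ⟨w', hwG', Finset.insert_subset (hXw' (hvX j)) hxw', hXw'⟩
    · intro x hx hne
      obtain ⟨hxG, h⟩ := Finset.mem_filter.1 hx
      refine Finset.mem_filter.2 ⟨hG.2 x hxG _ (Finset.erase_subset _ _) hne, fun j => ?_⟩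
      obtain ⟨w', hwG', hxw', hXw'⟩ := h j
      exact ⟨w', hwG', (Finset.erase_subset _ _).trans hxw', hXw'⟩
    · refine Finset.mem_filter.2 ⟨?_, fun j => ?_⟩
      · exact hG.2 _ (hX j₀) _ (Finset.singleton_subset_iff.2 (hvX j₀))
          (Finset.singleton_nonempty _)
      · exact ⟨X j, hX j, Finset.singleton_subset_iff.2 (hvX j), subset_rfl⟩
  have hKDchi : ∑ x ∈ KD, (-1 : ℤ) ^ (x.card - 1) = 1 := by
    apply chi_cone _ v
    · intro x hx
      exact hG.1 x (Finset.mem_filter.1 (hKDsub hx)).1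
    · intro x hx
      obtain ⟨hxK, j, hsub⟩ := Finset.mem_filter.1 hx
      have hins : insert v x ∈ K := by
        obtain ⟨hxG, h⟩ := Finset.mem_filter.1 hxK
        obtain ⟨w, hwG, hxw, hXw⟩ := h j₀
        have hiw : insert v x ⊆ w := Finset.insert_subset (hXw (hvX j₀)) hxw
        refine Finset.mem_filter.2 ⟨hG.2 w hwG _ hiw (Finset.insert_nonempty _ _), fun j' => ?_⟩
        obtain ⟨w', hwG', hxw', hXw'⟩ := h j'
        exact ⟨w', hwG', Finset.insert_subset (hXw' (hvX j')) hxw', hXw'⟩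
      exact Finset.mem_filter.2 ⟨hins, j, Finset.insert_subset (hvX j) hsub⟩
    · intro x hx hne
      obtain ⟨hxK, j, hsub⟩ := Finset.mem_filter.1 hx
      have hers : x.erase v ∈ K := by
        obtain ⟨hxG, h⟩ := Finset.mem_filter.1 hxK
        refine Finset.mem_filter.2 ⟨hG.2 x hxG _ (Finset.erase_subset _ _) hne, fun j' => ?_⟩
        obtain ⟨w', hwG', hxw', hXw'⟩ := h j'
        exact ⟨w', hwG', (Finset.erase_subset _ _).trans hxw', hXw'⟩
      exact Finset.mem_filter.2 ⟨hers, j, (Finset.erase_subset _ _).trans hsub⟩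
    · refine Finset.mem_filter.2 ⟨?_, j₀, Finset.singleton_subset_iff.2 (hvX j₀)⟩
      refine Finset.mem_filter.2 ⟨?_, fun j => ?_⟩
      · exact hG.2 _ (hX j₀) _ (Finset.singleton_subset_iff.2 (hvX j₀))
          (Finset.singleton_nonempty _)
      · exact ⟨X j, hX j, Finset.singleton_subset_iff.2 (hvX j), subset_rfl⟩
  rw [hset, Finset.sum_sdiff_eq_sub hKDsub, hKchi, hKDchi]
  ring

lemma sphere_formula (G : Finset (Finset ℕ)) (hG : IsComplex G) {m : ℕ} (hm : 1 ≤ m) :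
    ∑ x ∈ G, (-1 : ℤ) ^ (x.card - 1) * wm m (sphereC G x) = 0 := by
  classical
  have hmemeq : ∀ x, ∀ X : Fin m → Finset ℕ, (∀ j, X j ∈ sphereC G x) →
      (interTuple X ∈ sphereC G x ↔ interTuple X ∈ G) := by
    intro x X h
    constructor
    · intro hz
      exact (Finset.mem_filter.1 (Finset.mem_sdiff.1 hz).1).1
    · intro hzG
      set j₀ : Fin m := ⟨0, hm⟩
      have hzsub : interTuple X ⊆ X j₀ := fun v hv => (Finset.mem_filter.1 hv).2 j₀
      have h0 := h j₀
      rw [sphereC, Finset.mem_sdiff] at h0 ⊢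
      obtain ⟨hb, hs⟩ := h0
      rw [ballC, Finset.mem_filter] at hb
      obtain ⟨hXG, w, hwG, hxw, hXw⟩ := hb
      constructor
      · rw [ballC, Finset.mem_filter]
        exact ⟨hzG, w, hwG, hxw, hzsub.trans hXw⟩
      · intro hst
        rw [starC, Finset.mem_filter] at hst
        exact hs (Finset.mem_filter.2 ⟨hXG, hst.2.trans hzsub⟩)
  have hwm : ∀ x ∈ G, wm m (sphereC G x) =
      ∑ X ∈ Fintype.piFinset (fun _ : Fin m => G),
        (if (∀ j, X j ∈ sphereC G x) ∧ interTuple X ∈ G then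
          ∏ j, (-1 : ℤ) ^ ((X j).card - 1) else 0) := by
    intro x _
    rw [wm]
    have hsub : Fintype.piFinset (fun _ : Fin m => sphereC G x)
        ⊆ Fintype.piFinset (fun _ : Fin m => G) := by
      intro X hXm
      rw [Fintype.mem_piFinset] at hXm ⊢
      intro j
      exact (Finset.mem_filter.1 (Finset.mem_sdiff.1 (hXm j)).1).1
    rw [← Finset.sum_subset hsub (fun X _ hXnot => ?_)]
    · apply Finset.sum_congr rfl
      intro X hXm
      rw [Fintype.mem_piFinset] at hXm
      by_cases hzG : interTuple X ∈ G
      · rw [if_pos ((hmemeq x X hXm).2 hzG), if_pos ⟨hXm, hzG⟩]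
      · rw [if_neg, if_neg]
        · rintro ⟨_, h⟩; exact hzG h
        · intro h; exact hzG ((hmemeq x X hXm).1 h)
    · rw [Fintype.mem_piFinset] at hXnot
      push_neg at hXnot
      rw [if_neg]
      rintro ⟨hall, _⟩
      obtain ⟨j, hj⟩ := hXnot
      exact hj (hall j)
  have hstep : ∑ x ∈ G, (-1 : ℤ) ^ (x.card - 1) * wm m (sphereC G x) =
      ∑ X ∈ Fintype.piFinset (fun _ : Fin m => G), ∑ x ∈ G,
        (if (∀ j, X j ∈ sphereC G x) ∧ interTuple X ∈ G then
          (-1 : ℤ) ^ (x.card - 1) * ∏ j, (-1 : ℤ) ^ ((X j).card - 1) else 0) := by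
    rw [Finset.sum_comm]
    apply Finset.sum_congr rfl
    intro x hx
    rw [hwm x hx, Finset.mul_sum]
    apply Finset.sum_congr rfl
    intro X _
    rw [mul_ite, mul_zero]
  rw [hstep]
  apply Finset.sum_eq_zero
  intro X hXm
  rw [Fintype.mem_piFinset] at hXm
  by_cases hzG : interTuple X ∈ G
  · have hcong : ∀ x ∈ G,
        (if (∀ j, X j ∈ sphereC G x) ∧ interTuple X ∈ G then
          (-1 : ℤ) ^ (x.card - 1) * ∏ j, (-1 : ℤ) ^ ((X j).card - 1) else 0) =
        (if (∀ j, X j ∈ sphereC G x) then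
          (-1 : ℤ) ^ (x.card - 1) * ∏ j, (-1 : ℤ) ^ ((X j).card - 1) else 0) := by
      intro x _
      by_cases hc : ∀ j, X j ∈ sphereC G x
      · rw [if_pos ⟨hc, hzG⟩, if_pos hc]
      · rw [if_neg, if_neg hc]
        rintro ⟨h, _⟩; exact hc h
    rw [Finset.sum_congr rfl hcong, ← Finset.sum_filter, ← Finset.sum_mul,
      key_vanish G hG hm X hXm hzG, zero_mul]
  · apply Finset.sum_eq_zero
    intro x _
    rw [if_neg]
    rintro ⟨_, h⟩
    exact hzG h

/-- If all unit spheres of `G` have the same nonzero `m`-th characteristic `c`, then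
`Σ_{x ∈ G} (-1)^{dim x} c = 0` and hence the Euler characteristic of `G` vanishes. -/
theorem constant_sphere_characteristic (G : Finset (Finset ℕ)) (hG : IsComplex G)
    (m : ℕ) (hm : 1 ≤ m) (c : ℤ) (hc : c ≠ 0)
    (hsph : ∀ x ∈ G, wm m (sphereC G x) = c) :
    (∑ x ∈ G, (-1 : ℤ) ^ (x.card - 1) * c = 0) ∧
    (∑ x ∈ G, (-1 : ℤ) ^ (x.card - 1) = 0) := by
  have h1 : ∑ x ∈ G, (-1 : ℤ) ^ (x.card - 1) * c = 0 := by
    rw [← sphere_formula G hG hm]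
    apply Finset.sum_congr rfl
    intro x hx
    rw [hsph x hx]
  refine ⟨h1, ?_⟩
  have h2 : (∑ x ∈ G, (-1 : ℤ) ^ (x.card - 1)) * c = 0 := by
    rw [Finset.sum_mul]; exact h1
  exact (mul_eq_zero.1 h2).resolve_right hc
end

section
/- (Join of spheres) If G is a p-sphere and H is a q-sphere (as finite abstract simplicial complexes), then the join G + H is a (p+q+1)-sphere. -/
open Finset

variable {α : Type*} [DecidableEq α]

/-- Contractibility, defined recursively: a one-point complex is contractible, and
`G` is contractible if there is a vertex `x ∈ G` such that the unit sphere `S(x)`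
and `G` minus the star `U(x)` are both contractible. -/
inductive Contractible : Finset (Finset ℕ) → Prop where
  | point (v : ℕ) : Contractible {{v}}
  | step (G : Finset (Finset ℕ)) (x : Finset ℕ) (hx : x ∈ G) (hv : x.card = 1)
      (hS : Contractible (sphereC G x)) (hU : Contractible (G \ starC G x)) :
      Contractible G

/-- `d`-spheres, defined recursively: the empty complex is the `(-1)`-sphere; a
nonempty complex `G` is a `d`-sphere if every vertex unit sphere is a
`(d-1)`-sphere (so `G` is a `d`-manifold) and removing some open star leaves a
contractible complex. -/
inductive IsSphere : ℤ → Finset (Finset ℕ) → Prop where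
  | empty : IsSphere (-1) (∅ : Finset (Finset ℕ))
  | succ (d : ℤ) (G : Finset (Finset ℕ)) (hne : G.Nonempty)
      (hmani : ∀ x ∈ G, x.card = 1 → IsSphere (d - 1) (sphereC G x))
      (hcon : ∃ x ∈ G, x.card = 1 ∧ Contractible (G \ starC G x)) :
      IsSphere d G

/-- The join of two complexes: `G + H = G ∪ H ∪ {x ∪ y : x ∈ G, y ∈ H}`. -/
def joinC (G H : Finset (Finset ℕ)) : Finset (Finset ℕ) :=
  G ∪ H ∪ (G ×ˢ H).image (fun p => p.1 ∪ p.2)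

/-! For a vertex `x` of `G`, which meets no simplex of `H`, both the unit sphere and the
complement of the star of `x` in `G + H` are the joins of the corresponding complexes of `G`
with `H`. So the recursive witnesses that `G` is a sphere or contractible transfer to `G + H`,
and the theorem follows by induction on both sphere structures. The complement of a star then
becomes the join of a contractible complex with a sphere, which is contractible by the same
recursion; it bottoms out at cones `{v} + H` over contractible `H`, where removing the apex `v`
leaves `H` both as its unit sphere and as the complement of its star. -/

section Simplices

variable {G H : Finset (Finset α)} {x y z : Finset α}

lemma mem_starC : z ∈ starC G x ↔ z ∈ G ∧ x ⊆ z := mem_filter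

lemma mem_sdiff_starC : z ∈ G \ starC G x ↔ z ∈ G ∧ ¬x ⊆ z := by
  rw [mem_sdiff, mem_starC]
  tauto

lemma mem_sphereC : z ∈ sphereC G x ↔ (z ∈ G ∧ ∃ y ∈ G, x ⊆ y ∧ z ⊆ y) ∧ ¬x ⊆ z := by
  rw [sphereC, mem_sdiff, ballC, mem_filter, mem_starC]
  tauto

lemma sphereC_subset : sphereC G x ⊆ G := fun _ hz => (mem_sphereC.1 hz).1.1

lemma sphereC_singleton_self : sphereC {x} x = ∅ := by
  ext z
  simp only [mem_sphereC, mem_singleton, exists_eq_left, notMem_empty, iff_false]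
  rintro ⟨⟨rfl, -⟩, h⟩
  exact h subset_rfl

lemma singleton_sdiff_starC_self : {x} \ starC {x} x = ∅ := by
  ext z
  simp only [mem_sdiff_starC, mem_singleton, notMem_empty, iff_false]
  rintro ⟨rfl, h⟩
  exact h subset_rfl

lemma disjoint_of_mem_of_disjoint_sup (hGH : Disjoint (G.sup id) (H.sup id))
    (hy : y ∈ G) (hz : z ∈ H) : Disjoint y z :=
  hGH.mono (le_sup (f := id) hy) (le_sup (f := id) hz)

lemma not_subset_of_mem_of_disjoint_sup (hGH : Disjoint (G.sup id) (H.sup id))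
    (hx : x ∈ G) (hxne : x.Nonempty) (hz : z ∈ H) : ¬x ⊆ z := fun h =>
  hxne.ne_empty ((disjoint_of_mem_of_disjoint_sup hGH hx hz).eq_bot_of_le h)

end Simplices

section Join

variable {G H : Finset (Finset ℕ)} {x y z : Finset ℕ}

lemma mem_joinC : z ∈ joinC G H ↔ z ∈ G ∨ z ∈ H ∨ ∃ a ∈ G, ∃ b ∈ H, a ∪ b = z := by
  simp only [joinC, mem_union, mem_image, mem_product, Prod.exists, or_assoc]
  tauto

lemma joinC_empty (G : Finset (Finset ℕ)) : joinC G ∅ = G := by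
  simp [joinC]

lemma empty_joinC (H : Finset (Finset ℕ)) : joinC ∅ H = H := by
  simp [joinC]

lemma joinC_comm (G H : Finset (Finset ℕ)) : joinC G H = joinC H G := by
  ext z
  simp only [mem_joinC]
  constructor <;>
  · rintro (h | h | ⟨a, ha, b, hb, rfl⟩)
    exacts [Or.inr (Or.inl h), Or.inl h, Or.inr (Or.inr ⟨b, hb, a, ha, union_comm b a⟩)]

lemma mem_or_mem_of_mem_joinC_of_card_eq_one (hGH : Disjoint (G.sup id) (H.sup id))
    (hx : x ∈ joinC G H) (hx1 : x.card = 1) : x ∈ G ∨ x ∈ H := by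
  rcases mem_joinC.1 hx with h | h | ⟨a, ha, b, hb, rfl⟩
  · exact Or.inl h
  · exact Or.inr h
  have hcard := card_union_of_disjoint (disjoint_of_mem_of_disjoint_sup hGH ha hb)
  rcases a.eq_empty_or_nonempty with rfl | hane
  · exact Or.inr (by rwa [empty_union])
  rcases b.eq_empty_or_nonempty with rfl | hbne
  · exact Or.inl (by rwa [union_empty])
  have := hane.card_pos
  have := hbne.card_pos
  omega

lemma mem_or_exists_subset_union_of_mem_joinC (hy : y ∈ joinC G H) :
    y ∈ H ∨ ∃ y' ∈ G, y ⊆ y' ∪ H.sup id := by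
  rcases mem_joinC.1 hy with h | h | ⟨a, ha, b, hb, rfl⟩
  · exact Or.inr ⟨y, h, subset_union_left⟩
  · exact Or.inl h
  · exact Or.inr ⟨a, ha, union_subset_union_right (le_sup (f := id) hb)⟩

variable (hGH : Disjoint (G.sup id) (H.sup id)) (hx : x ∈ G) (hxne : x.Nonempty)
include hGH hx hxne

lemma joinC_sdiff_starC_left :
    joinC G H \ starC (joinC G H) x = joinC (G \ starC G x) H := by
  ext z
  simp only [mem_sdiff_starC, mem_joinC]
  constructor
  · rintro ⟨hz | hz | ⟨a, ha, b, hb, rfl⟩, hxz⟩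
    · exact Or.inl ⟨hz, hxz⟩
    · exact Or.inr (Or.inl hz)
    · exact Or.inr (Or.inr ⟨a, ⟨ha, fun h => hxz (h.trans subset_union_left)⟩, b, hb, rfl⟩)
  · rintro (⟨hz, hxz⟩ | hz | ⟨a, ⟨ha, hxa⟩, b, hb, rfl⟩)
    · exact ⟨Or.inl hz, hxz⟩
    · exact ⟨Or.inr (Or.inl hz), not_subset_of_mem_of_disjoint_sup hGH hx hxne hz⟩
    · refine ⟨Or.inr (Or.inr ⟨a, ha, b, hb, rfl⟩), fun h => hxa ?_⟩
      exact (disjoint_of_mem_of_disjoint_sup hGH hx hb).left_le_of_le_sup_right h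

lemma sphereC_joinC_left : sphereC (joinC G H) x = joinC (sphereC G x) H := by
  ext z
  simp only [mem_sphereC, mem_joinC]
  constructor
  · rintro ⟨⟨hz, y, hy, hxy, hzy⟩, hxz⟩
    obtain hyH | ⟨y', hy', hyy'⟩ := mem_or_exists_subset_union_of_mem_joinC (mem_joinC.2 hy)
    · exact absurd hxy (not_subset_of_mem_of_disjoint_sup hGH hx hxne hyH)
    have hG_part : ∀ {a}, a ∈ G → a ⊆ y → a ⊆ y' := fun ha hay =>
      (hGH.mono_left (le_sup (f := id) ha)).left_le_of_le_sup_right (hay.trans hyy')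
    rcases hz with hz | hz | ⟨a, ha, b, hb, rfl⟩
    · exact Or.inl ⟨⟨hz, y', hy', hG_part hx hxy, hG_part hz hzy⟩, hxz⟩
    · exact Or.inr (Or.inl hz)
    · refine Or.inr (Or.inr ⟨a, ⟨⟨ha, y', hy', hG_part hx hxy, ?_⟩, ?_⟩, b, hb, rfl⟩)
      · exact hG_part ha (subset_union_left.trans hzy)
      · exact fun h => hxz (h.trans subset_union_left)
  · rintro (⟨⟨hz, y, hy, hxy, hzy⟩, hxz⟩ | hz | ⟨a, ⟨⟨ha, y, hy, hxy, hay⟩, hxa⟩, b, hb, rfl⟩)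
    · exact ⟨⟨Or.inl hz, y, Or.inl hy, hxy, hzy⟩, hxz⟩
    · refine ⟨⟨Or.inr (Or.inl hz), x ∪ z, Or.inr (Or.inr ⟨x, hx, z, hz, rfl⟩),
        subset_union_left, subset_union_right⟩, ?_⟩
      exact not_subset_of_mem_of_disjoint_sup hGH hx hxne hz
    · refine ⟨⟨Or.inr (Or.inr ⟨a, ha, b, hb, rfl⟩), y ∪ b, Or.inr (Or.inr ⟨y, hy, b, hb, rfl⟩),
        hxy.trans subset_union_left, union_subset_union_left hay⟩, fun h => hxa ?_⟩
      exact (disjoint_of_mem_of_disjoint_sup hGH hx hb).left_le_of_le_sup_right h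

end Join

section Contractible

variable {G H : Finset (Finset ℕ)} {x : Finset ℕ}

lemma Contractible.join_of_vertex_left (hGH : Disjoint (G.sup id) (H.sup id)) (hx : x ∈ G)
    (hx1 : x.card = 1) (hS : Contractible (joinC (sphereC G x) H))
    (hU : Contractible (joinC (G \ starC G x) H)) : Contractible (joinC G H) := by
  have hxne : x.Nonempty := one_le_card.1 hx1.ge
  refine .step _ x (mem_joinC.2 (Or.inl hx)) hx1 ?_ ?_
  · rwa [sphereC_joinC_left hGH hx hxne]
  · rwa [joinC_sdiff_starC_left hGH hx hxne]

lemma Contractible.join_of_vertex_right (hGH : Disjoint (G.sup id) (H.sup id)) (hx : x ∈ H)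
    (hx1 : x.card = 1) (hS : Contractible (joinC G (sphereC H x)))
    (hU : Contractible (joinC G (H \ starC H x))) : Contractible (joinC G H) := by
  rw [joinC_comm] at hS hU ⊢
  exact .join_of_vertex_left hGH.symm hx hx1 hS hU

lemma Contractible.singleton_join (v : ℕ) (hH : Contractible H)
    (hvH : Disjoint (({{v}} : Finset (Finset ℕ)).sup id) (H.sup id)) :
    Contractible (joinC {{v}} H) := by
  refine .join_of_vertex_left hvH (mem_singleton_self _) (card_singleton v) ?_ ?_
  · rwa [sphereC_singleton_self, empty_joinC]
  · rwa [singleton_sdiff_starC_self, empty_joinC]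

lemma Contractible.join (hG : Contractible G) (hH : Contractible H)
    (hGH : Disjoint (G.sup id) (H.sup id)) : Contractible (joinC G H) := by
  induction hG with
  | point v => exact hH.singleton_join v hGH
  | step G x hx hx1 _ _ ihS ihU =>
    exact .join_of_vertex_left hGH hx hx1
      (ihS (hGH.mono_left (sup_mono sphereC_subset)))
      (ihU (hGH.mono_left (sup_mono sdiff_subset)))

lemma Contractible.join_isSphere {q : ℤ} (hG : Contractible G) (hH : IsSphere q H)
    (hGH : Disjoint (G.sup id) (H.sup id)) : Contractible (joinC G H) := by
  induction hH with
  | empty => rwa [joinC_empty]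
  | succ q H _ _ hcon ih =>
    obtain ⟨x, hx, hx1, hU⟩ := hcon
    exact .join_of_vertex_right hGH hx hx1
      (ih x hx hx1 (hGH.mono_right (sup_mono sphereC_subset)))
      (hG.join hU (hGH.mono_right (sup_mono sdiff_subset)))

end Contractible

/-- The join of a `p`-sphere and a `q`-sphere (with disjoint vertex sets) is a
`(p+q+1)`-sphere. -/
theorem join_of_spheres (G H : Finset (Finset ℕ))
    (hGH : Disjoint (G.sup id) (H.sup id))
    (p q : ℤ) (hG : IsSphere p G) (hH : IsSphere q H) :
    IsSphere (p + q + 1) (joinC G H) := by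
  induction hG generalizing H q with
  | empty => simpa [empty_joinC] using hH
  | succ p G hGne hGmani hGcon ihG =>
    have hGsph : IsSphere p G := .succ p G hGne hGmani hGcon
    induction hH with
    | empty => simpa [joinC_empty] using hGsph
    | succ q H hHne hHmani hHcon ihH =>
      have hHsph : IsSphere q H := .succ q H hHne hHmani hHcon
      refine .succ _ _ (hGne.mono subset_union_left |>.mono subset_union_left) ?_ ?_
      · intro x hx hx1
        have hxne : x.Nonempty := one_le_card.1 hx1.ge
        rcases mem_or_mem_of_mem_joinC_of_card_eq_one hGH hx hx1 with hxG | hxH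
        · rw [sphereC_joinC_left hGH hxG hxne, show p + q + 1 - 1 = p - 1 + q + 1 by ring]
          exact ihG x hxG hx1 H (hGH.mono_left (sup_mono sphereC_subset)) q hHsph
        · rw [joinC_comm, sphereC_joinC_left hGH.symm hxH hxne, joinC_comm,
            show p + q + 1 - 1 = p + (q - 1) + 1 by ring]
          exact ihH x hxH hx1 (hGH.mono_right (sup_mono sphereC_subset))
      · obtain ⟨x, hx, hx1, hU⟩ := hGcon
        refine ⟨x, mem_joinC.2 (Or.inl hx), hx1, ?_⟩
        rw [joinC_sdiff_starC_left hGH hx (one_le_card.1 hx1.ge)]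
        exact hU.join_isSphere hHsph (hGH.mono_left (sup_mono sdiff_subset))
end
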